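/- Comma-propagated universal arrows, descending case: let J be a small category, let G : (J ⥤ D) ⥤ C be a functor, and let (d, g) be a universal arrow from an object c of C to G, where d is an object of J ⥤ D and g : c ⟶ G d. Then the pair consisting of the object L.obj(𝟙_d) of J ⥤ Arrow D and the morphism (g, g) : 𝟙_c ⟶ (K ⋙ Ĝ).obj(L.obj(𝟙_d)) is a universal arrow from the object 𝟙_c of Arrow C to the comma-propagated functor K ⋙ Ĝ : (J ⥤ Arrow D) ⥤ Arrow C, where K : (J ⥤ Arrow D) ⥤ Arrow(J ⥤ D) is the modulator inverse to L (so that (K ⋙ Ĝ).obj(L.obj(𝟙_d)) = Ĝ.obj(𝟙_d) = 𝟙_{G d}). -/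

import Mathlib

open CategoryTheory

/-- The modulator functor `L : Arrow (J ⥤ D) ⥤ (J ⥤ Arrow D)`. -/
def modulatorL (J : Type u₁) [SmallCategory J] (D : Type u₂) [Category.{v₂} D] :
    Arrow (J ⥤ D) ⥤ (J ⥤ Arrow D) where
  obj h :=
    { obj := fun j => Arrow.mk (h.hom.app j)
      map := fun {j j'} u =>
        Arrow.homMk' (u := h.left.map u) (v := h.right.map u) (h.hom.naturality u)
      map_id := by intro j; ext <;> simp
      map_comp := by intro _ _ _ u v; ext <;> simp }
  map {h k} g :=
    { app := fun j =>
        Arrow.homMk' (u := g.left.app j) (v := g.right.app j)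
          (by exact NatTrans.congr_app (Arrow.w g) j)
      naturality := by intro j j' u; ext; exacts [g.left.naturality u, g.right.naturality u] }
  map_id := by intro h; ext j <;> simp
  map_comp := by intro _ _ _ f g; ext j <;> rfl

/-- The modulator functor `K : (J ⥤ Arrow D) ⥤ Arrow (J ⥤ D)`, inverse to `L`. -/
def modulatorK (J : Type u₁) [SmallCategory J] (D : Type u₂) [Category.{v₂} D] :
    (J ⥤ Arrow D) ⥤ Arrow (J ⥤ D) where
  obj F := Arrow.mk (X := F ⋙ Arrow.leftFunc) (Y := F ⋙ Arrow.rightFunc)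
    { app := fun j => (F.obj j).hom
      naturality := fun j j' u => Arrow.w (F.map u) }
  map {F F'} α := Arrow.homMk'
    (u := Functor.whiskerRight α Arrow.leftFunc) (v := Functor.whiskerRight α Arrow.rightFunc)
    (by ext j; exact Arrow.w (α.app j))
  map_id := by intro F; ext j <;> simp
  map_comp := by intro _ _ _ f g; ext j <;> simp

/-! A morphism in `Arrow E` out of an identity arrow `𝟙 d` is determined by its left component
`p`, its right component being `p ≫ f`. Hence a morphism of structured arrows from `(𝟙 d, (g, g))`
to `(f, (u, v))` over `Ĝ` amounts to a `p : d ⟶ f.left` with `g ≫ G.map p = u`, and universality of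
`g` provides exactly one. The modulator `K` is fully faithful, so the comma category of `K ⋙ Ĝ`
embeds fully faithfully into that of `Ĝ`, sending `(L (𝟙 d), (g, g))` to `(𝟙 d, (g, g))`, and
fully faithful functors reflect initial objects. -/

namespace CategoryTheory

open Limits

lemma Arrow.right_eq_left_comp_hom_of_id {T : Type*} [Category T] {a : T} {f : Arrow T}
    (m : Arrow.mk (𝟙 a) ⟶ f) : m.right = m.left ≫ f.hom :=
  ((Arrow.w m).trans (Category.id_comp _)).symm

namespace StructuredArrow

variable {E C : Type*} [Category E] [Category C] {G : E ⥤ C} {c : C} {d : E}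

def IsUniversal.mapArrowMkId {g : c ⟶ G.obj d} (h : IsUniversal (mk g)) :
    IsUniversal (mk (T := G.mapArrow) (Y := Arrow.mk (𝟙 d))
      (Arrow.homMk (f := Arrow.mk (𝟙 c)) (u := g) (v := g) (by simp [Functor.mapArrow]))) := by
  refine IsInitial.ofUniqueHom (fun X ↦ ?_) (fun X m ↦ ?_)
  all_goals
    let u : c ⟶ G.obj X.right.left := X.hom.left
    have hX : X.hom.right = u ≫ G.map X.right.hom := Arrow.right_eq_left_comp_hom_of_id X.hom
  · refine homMk (Arrow.homMk (h.desc (mk u)) (h.desc (mk u) ≫ X.right.hom)) ?_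
    ext
    · exact h.fac (mk u)
    · show g ≫ G.map (h.desc (mk u) ≫ X.right.hom) = X.hom.right
      rw [hX, G.map_comp]
      exact h.fac_assoc (mk u) _
  · have hl : m.right.left = h.desc (mk u) :=
      h.hom_ext ((congrArg Arrow.Hom.left (w m)).trans (h.fac (mk u)).symm)
    ext
    · exact hl
    · rw [Arrow.right_eq_left_comp_hom_of_id m.right, hl]
      rfl

end StructuredArrow

/-- `L (K F)` unfolds to `F`, so `L.map` inverts `K.map`. -/
def modulatorK.fullyFaithful (J : Type u₁) [SmallCategory J] (D : Type u₂) [Category.{v₂} D] :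
    (modulatorK J D).FullyFaithful where
  preimage β := (modulatorL J D).map β

instance (J : Type u₁) [SmallCategory J] (D : Type u₂) [Category.{v₂} D] :
    (modulatorK J D).Full := (modulatorK.fullyFaithful J D).full

instance (J : Type u₁) [SmallCategory J] (D : Type u₂) [Category.{v₂} D] :
    (modulatorK J D).Faithful := (modulatorK.fullyFaithful J D).faithful

end CategoryTheory

/-- Comma-propagated universal arrows (descending case): if `(d, g)` is a
universal arrow from `c : C` to `G : (J ⥤ D) ⥤ C`, then `(L.obj (𝟙 d), (g, g))` is a
universal arrow from the object `𝟙 c` of `Arrow C` to the comma-propagated functor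
`K ⋙ Ĝ : (J ⥤ Arrow D) ⥤ Arrow C`. -/
theorem descending_universal_arrow
    (J : Type u₁) [SmallCategory J] {D : Type u₂} [Category.{v₂} D]
    {C : Type u₃} [Category.{v₃} C]
    (G : (J ⥤ D) ⥤ C) (c : C) (d : J ⥤ D) (g : c ⟶ G.obj d)
    (h : Limits.IsInitial (StructuredArrow.mk g)) :
    Nonempty (Limits.IsInitial (StructuredArrow.mk
      (T := modulatorK J D ⋙ G.mapArrow) (Y := (modulatorL J D).obj (Arrow.mk (𝟙 d)))
      (Arrow.homMk (f := Arrow.mk (𝟙 c))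
        (g := (modulatorK J D ⋙ G.mapArrow).obj ((modulatorL J D).obj (Arrow.mk (𝟙 d))))
        (u := g) (v := g)
        (by
          show g ≫ G.map (𝟙 d) = (Arrow.mk (𝟙 c)).hom ≫ g
          simp)))) :=
  ⟨Limits.IsInitial.isInitialOfObj (StructuredArrow.pre _ (modulatorK J D) G.mapArrow) _
    (StructuredArrow.IsUniversal.mapArrowMkId h)⟩
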